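/- Let a < b be real numbers with b − a > 4 (equivalently γ̂_G = (b−a)/2 > 2), and let v(w) = (1/2)σ((w−a)²) + (1/2)σ((w−b)²) be the two-client MaxFL objective. Then v'(w) > 0 for every w with a + 2 < w < (a+b)/2, and by symmetry v'(w) < 0 for every w with (a+b)/2 < w < b − 2. -/

import Mathlib

noncomputable def sigmoid (x : ℝ) : ℝ := 1 / (1 + Real.exp (-x))

/-!
Writing `s` for the logistic function, the objective is `v w = φ (w - a) + φ (w - b)` with
`φ u = s (u²) / 2`, whose derivative `φ' u = u s'(u²)` is odd, so
`v' w = φ' (w - a) - φ' (b - w)`. Since `s'' = s' (1 - 2 s)`,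
`φ'' u = s'(u²) (1 - 2u² (2 s(u²) - 1))`, and this is negative as soon as `u² ≥ 3/2` because
`2 s(x) - 1 = tanh (x / 2)` approaches `1` exponentially fast. Hence `φ'` is strictly decreasing
on `[2, ∞)`, and for `a + 2 < w < (a + b) / 2` we have `2 < w - a < b - w`.
-/

open Set

lemma sigmoid_eq_real_sigmoid : sigmoid = Real.sigmoid := by
  funext x
  simp only [sigmoid, Real.sigmoid_def, one_div]

noncomputable def sigmoidDeriv (x : ℝ) : ℝ := Real.sigmoid x * (1 - Real.sigmoid x)

lemma sigmoidDeriv_pos (x : ℝ) : 0 < sigmoidDeriv x :=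
  mul_pos (Real.sigmoid_pos x) (sub_pos.mpr (Real.sigmoid_lt_one x))

lemma hasDerivAt_sigmoidDeriv (x : ℝ) :
    HasDerivAt sigmoidDeriv (sigmoidDeriv x * (1 - 2 * Real.sigmoid x)) x := by
  have hs := Real.hasDerivAt_sigmoid x
  refine (hs.mul (hs.const_sub 1)).congr_deriv ?_
  unfold sigmoidDeriv
  ring

noncomputable def sigmoidSqSlope (u : ℝ) : ℝ := u * sigmoidDeriv (u ^ 2)

lemma hasDerivAt_half_sigmoid_sq (u : ℝ) :
    HasDerivAt (fun u : ℝ => 1 / 2 * Real.sigmoid (u ^ 2)) (sigmoidSqSlope u) u := by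
  refine (((Real.hasDerivAt_sigmoid (u ^ 2)).comp u (hasDerivAt_pow 2 u)).const_mul
    (1 / 2)).congr_deriv ?_
  simp only [sigmoidSqSlope, sigmoidDeriv, Nat.cast_ofNat]
  ring

lemma sigmoidSqSlope_neg (u : ℝ) : sigmoidSqSlope (-u) = -sigmoidSqSlope u := by
  simp only [sigmoidSqSlope, neg_sq, neg_mul]

lemma hasDerivAt_sigmoidSqSlope (u : ℝ) :
    HasDerivAt sigmoidSqSlope
      (sigmoidDeriv (u ^ 2) * (1 - 2 * u ^ 2 * (2 * Real.sigmoid (u ^ 2) - 1))) u := by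
  refine ((hasDerivAt_id u).mul ((hasDerivAt_sigmoidDeriv (u ^ 2)).comp u
    (hasDerivAt_pow 2 u))).congr_deriv ?_
  simp only [id_eq, Function.comp_apply, Nat.cast_ofNat]
  ring

lemma one_lt_two_mul_mul_two_mul_sigmoid_sub_one {x : ℝ} (hx : 3 / 2 ≤ x) :
    1 < 2 * x * (2 * Real.sigmoid x - 1) := by
  set A := Real.exp (-x)
  have hA : 0 < A := Real.exp_pos _
  have hA_le : A * (1 + x) ≤ 1 := by
    calc A * (1 + x) ≤ A * Real.exp x := by gcongr; linarith [Real.add_one_le_exp x]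
      _ = 1 := by rw [← Real.exp_add, neg_add_cancel, Real.exp_zero]
  have hsig : 2 * Real.sigmoid x - 1 = (1 - A) / (1 + A) := by
    rw [Real.sigmoid_def]
    field_simp
    ring
  rw [hsig, mul_div_assoc', lt_div_iff₀ (by positivity)]
  nlinarith

lemma strictAntiOn_sigmoidSqSlope : StrictAntiOn sigmoidSqSlope (Ici 2) := by
  refine strictAntiOn_of_hasDerivWithinAt_neg (convex_Ici 2)
    (fun u _ => (hasDerivAt_sigmoidSqSlope u).continuousAt.continuousWithinAt)
    (fun u _ => (hasDerivAt_sigmoidSqSlope u).hasDerivWithinAt) fun u hu => ?_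
  rw [interior_Ici, mem_Ioi] at hu
  have := one_lt_two_mul_mul_two_mul_sigmoid_sub_one (x := u ^ 2) (by nlinarith)
  exact mul_neg_of_pos_of_neg (sigmoidDeriv_pos _) (by linarith)

lemma hasDerivAt_maxfl_objective (a b w : ℝ) :
    HasDerivAt (fun w : ℝ => (1 / 2) * sigmoid ((w - a) ^ 2) + (1 / 2) * sigmoid ((w - b) ^ 2))
      (sigmoidSqSlope (w - a) - sigmoidSqSlope (b - w)) w := by
  rw [sigmoid_eq_real_sigmoid, ← neg_sub w b, sigmoidSqSlope_neg, sub_neg_eq_add]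
  refine (((hasDerivAt_half_sigmoid_sq (w - a)).comp w ((hasDerivAt_id w).sub_const a)).add
    ((hasDerivAt_half_sigmoid_sq (w - b)).comp w ((hasDerivAt_id w).sub_const b))).congr_deriv ?_
  ring

theorem deriv_sign_between_general (a b : ℝ) :
    (∀ w : ℝ, a + 2 < w → w < (a + b) / 2 →
      deriv (fun w : ℝ => (1 / 2) * sigmoid ((w - a) ^ 2) + (1 / 2) * sigmoid ((w - b) ^ 2)) w
        > 0) ∧
    (∀ w : ℝ, (a + b) / 2 < w → w < b - 2 →
      deriv (fun w : ℝ => (1 / 2) * sigmoid ((w - a) ^ 2) + (1 / 2) * sigmoid ((w - b) ^ 2)) w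
        < 0) := by
  refine ⟨fun w h₁ h₂ => ?_, fun w h₁ h₂ => ?_⟩ <;>
    rw [(hasDerivAt_maxfl_objective a b w).deriv]
  · exact sub_pos.mpr <| strictAntiOn_sigmoidSqSlope (a := w - a) (mem_Ici.mpr (by linarith))
      (mem_Ici.mpr (by linarith)) (by linarith)
  · exact sub_neg.mpr <| strictAntiOn_sigmoidSqSlope (a := b - w) (mem_Ici.mpr (by linarith))
      (mem_Ici.mpr (by linarith)) (by linarith)

theorem deriv_sign_between (a b : ℝ) (hab : a < b) (hsep : b - a > 4) :
    (∀ w : ℝ, a + 2 < w → w < (a + b) / 2 →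
      deriv (fun w : ℝ => (1 / 2) * sigmoid ((w - a) ^ 2) + (1 / 2) * sigmoid ((w - b) ^ 2)) w
        > 0) ∧
    (∀ w : ℝ, (a + b) / 2 < w → w < b - 2 →
      deriv (fun w : ℝ => (1 / 2) * sigmoid ((w - a) ^ 2) + (1 / 2) * sigmoid ((w - b) ^ 2)) w
        < 0) :=
  deriv_sign_between_general a b
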